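/- arXiv:2309.17087 — 7 statements merged into one kernel-verified Lean document; each statement's English description precedes it below -/
import Mathlib

section
/- For the SI system with constant transmission rate τ, the cumulative number of infectious 𝓘(t) = ∫_{t₀}^t I(σ)dσ satisfies the scalar ODE 𝓘'(t) = I₀ + S₀(1 − exp(−τ𝓘(t))) − ν𝓘(t) with 𝓘(t₀) = 0. -/
/-!
Writing `𝓘` for a primitive of `I` with `𝓘 t₀ = 0`, the SI system has two first integrals:
`(S + I + ν 𝓘)' = 0` and `(S · exp (τ 𝓘))' = S' exp (τ 𝓘) + τ I S exp (τ 𝓘) = 0`.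
The second gives `S = S₀ exp (-τ 𝓘)`; substituting into the first expresses `I = 𝓘'`
as a function of `𝓘` alone.
-/

open intervalIntegral Real

theorem eq_of_forall_hasDerivAt_zero_of_le {E : Type*} [NormedAddCommGroup E] [NormedSpace ℝ E]
    {f : ℝ → E} {a : ℝ} (hf : ∀ t, a ≤ t → HasDerivAt f 0 t) {t : ℝ} (ht : a ≤ t) :
    f t = f a :=
  constant_of_has_deriv_right_zero
    (fun x hx => (hf x hx.1).continuousAt.continuousWithinAt)
    (fun x hx => (hf x hx.1).hasDerivWithinAt) t ⟨ht, le_rfl⟩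

namespace SI

variable {τ ν t₀ : ℝ} {S I J : ℝ → ℝ}
  (hS : ∀ t, t₀ ≤ t → HasDerivAt S (-(τ * S t * I t)) t)
  (hJ : ∀ t, t₀ ≤ t → HasDerivAt J (I t) t)
include hS hJ

theorem susceptible_mul_exp_eq {t : ℝ} (ht : t₀ ≤ t) :
    S t * exp (τ * J t) = S t₀ * exp (τ * J t₀) := by
  refine eq_of_forall_hasDerivAt_zero_of_le (f := fun x => S x * exp (τ * J x))
    (fun x hx => ?_) ht
  exact ((hS x hx).mul ((hJ x hx).const_mul τ).exp).congr_deriv (by ring)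

theorem susceptible_add_infected_add_mul_eq
    (hI : ∀ t, t₀ ≤ t → HasDerivAt I (τ * S t * I t - ν * I t) t) {t : ℝ} (ht : t₀ ≤ t) :
    S t + I t + ν * J t = S t₀ + I t₀ + ν * J t₀ := by
  refine eq_of_forall_hasDerivAt_zero_of_le (f := fun x => S x + I x + ν * J x)
    (fun x hx => ?_) ht
  exact (((hS x hx).add (hI x hx)).add ((hJ x hx).const_mul ν)).congr_deriv (by ring)

theorem infected_eq (hI : ∀ t, t₀ ≤ t → HasDerivAt I (τ * S t * I t - ν * I t) t)
    (hJ₀ : J t₀ = 0) {t : ℝ} (ht : t₀ ≤ t) :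
    I t = I t₀ + S t₀ * (1 - exp (-τ * J t)) - ν * J t := by
  have hSt : S t = S t₀ * exp (-τ * J t) := by
    have h := susceptible_mul_exp_eq hS hJ ht
    rw [hJ₀, mul_zero, exp_zero, mul_one] at h
    rw [← h, mul_assoc, ← exp_add, neg_mul, add_neg_cancel, exp_zero, mul_one]
  have h := susceptible_add_infected_add_mul_eq hS hJ hI ht
  rw [hJ₀, mul_zero, add_zero, hSt] at h
  linear_combination h

end SI

theorem stmt_3_general (τ ν S₀ I₀ t₀ : ℝ)
    (S I : ℝ → ℝ) (hIc : Continuous I)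
    (hS : ∀ t : ℝ, t₀ ≤ t → HasDerivAt S (-(τ * S t * I t)) t)
    (hI : ∀ t : ℝ, t₀ ≤ t → HasDerivAt I (τ * S t * I t - ν * I t) t)
    (hS0 : S t₀ = S₀) (hI0 : I t₀ = I₀) :
    ((∫ σ in t₀..t₀, I σ) = 0) ∧
    ∀ t : ℝ, t₀ ≤ t →
      HasDerivAt (fun s => ∫ σ in t₀..s, I σ)
        (I₀ + S₀ * (1 - Real.exp (-τ * ∫ σ in t₀..t, I σ)) - ν * ∫ σ in t₀..t, I σ) t := by
  have h𝓘 : ∀ t, HasDerivAt (fun s => ∫ σ in t₀..s, I σ) (I t) t := fun t =>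
    integral_hasDerivAt_right (hIc.intervalIntegrable _ _)
      hIc.aestronglyMeasurable.stronglyMeasurableAtFilter hIc.continuousAt
  refine ⟨integral_same, fun t ht => ?_⟩
  rw [← hS0, ← hI0, ← SI.infected_eq hS (fun x _ => h𝓘 x) hI integral_same ht]
  exact h𝓘 t

/-- For the SI system with constant transmission rate, the cumulative number of
infectious `𝓘 t = ∫_{t₀}^t I` satisfies
`𝓘' t = I₀ + S₀ (1 − exp (−τ 𝓘 t)) − ν 𝓘 t` with `𝓘 t₀ = 0`. -/
theorem stmt_3 (τ ν S₀ I₀ t₀ : ℝ) (hτ : 0 < τ) (hν : 0 < ν) (hS₀ : 0 < S₀) (hI₀ : 0 < I₀)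
    (S I : ℝ → ℝ) (hIc : Continuous I)
    (hS : ∀ t : ℝ, t₀ ≤ t → HasDerivAt S (-(τ * S t * I t)) t)
    (hI : ∀ t : ℝ, t₀ ≤ t → HasDerivAt I (τ * S t * I t - ν * I t) t)
    (hS0 : S t₀ = S₀) (hI0 : I t₀ = I₀) :
    ((∫ σ in t₀..t₀, I σ) = 0) ∧
    ∀ t : ℝ, t₀ ≤ t →
      HasDerivAt (fun s => ∫ σ in t₀..s, I σ)
        (I₀ + S₀ * (1 - Real.exp (-τ * ∫ σ in t₀..t, I σ)) - ν * ∫ σ in t₀..t, I σ) t :=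
  stmt_3_general τ ν S₀ I₀ t₀ S I hIc hS hI hS0 hI0
end

section
/- Let F(x; I₀, S₀, τ, ν) = I₀ + S₀(1 − exp(−τx)) − νx and let 𝓘(t; I₀, S₀, τ, ν) be the solution of 𝓘' = F(𝓘) with 𝓘(t₀) = 0. Fix t > t₀. Then 𝓘(t) is strictly increasing in each of I₀ > 0, S₀ > 0, τ > 0, and strictly decreasing in ν > 0 (equivalently strictly increasing in 1/ν). -/
/-!
A solution with `I₀ > 0` stays nonnegative (at a zero its derivative is `I₀`), and then
`e^{νs} 𝓘(s)`, whose derivative is `e^{νs} (I₀ + S₀ (1 - e^{-τ𝓘}))`, is strictly increasing, so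
`𝓘 > 0` on `(t₀, t]`. On `[0, ∞)` the field `F₁` lies below `F₂` and satisfies the one-sided
Lipschitz bound `F₁ y - F₁ x ≤ (S₀τ - ν)(y - x)` for `x ≤ y`; a fence argument then gives
`𝓘₁ ≤ 𝓘₂`. Finally `e^{νs} (𝓘₂ - 𝓘₁)` has derivative
`e^{νs} ((F₂ - F₁)(𝓘₂) + (G₁(𝓘₂) - G₁(𝓘₁)))` with `G₁ = F₁ + ν·` increasing; the first term is
positive because `𝓘₂ > 0` and the parameters differ, so this weighted difference increases
strictly from `0`.
-/

open Set Real

noncomputable def epidemicField (I₀ S₀ τ ν x : ℝ) : ℝ := I₀ + S₀ * (1 - exp (-τ * x)) - ν * x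

section Field

variable {I₀ S₀ τ ν I₀' S₀' τ' ν' x y : ℝ}

lemma epidemicField_add_mul_mono (hS₀ : 0 ≤ S₀) (hτ : 0 ≤ τ) (hxy : x ≤ y) :
    epidemicField I₀ S₀ τ ν x + ν * x ≤ epidemicField I₀ S₀ τ ν y + ν * y := by
  have : exp (-τ * y) ≤ exp (-τ * x) := exp_le_exp.2 (by nlinarith)
  simp only [epidemicField]
  nlinarith

lemma epidemicField_add_mul_pos (hI₀ : 0 < I₀) (hS₀ : 0 ≤ S₀) (hτ : 0 ≤ τ) (hx : 0 ≤ x) :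
    0 < epidemicField I₀ S₀ τ ν x + ν * x := by
  have : exp (-τ * x) ≤ 1 := exp_le_one_iff.2 (by nlinarith)
  simp only [epidemicField]
  nlinarith

lemma epidemicField_sub_le (hS₀ : 0 ≤ S₀) (hτ : 0 ≤ τ) (hx : 0 ≤ x) (hxy : x ≤ y) :
    epidemicField I₀ S₀ τ ν y - epidemicField I₀ S₀ τ ν x ≤ (S₀ * τ - ν) * (y - x) := by
  have hexp_le : exp (-τ * x) ≤ 1 := exp_le_one_iff.2 (by nlinarith)
  have hgap : 1 - exp (-(τ * (y - x))) ≤ τ * (y - x) := by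
    linarith [add_one_le_exp (-(τ * (y - x)))]
  have hsplit : exp (-τ * y) = exp (-τ * x) * exp (-(τ * (y - x))) := by
    rw [← exp_add]; ring_nf
  have hexp_gap_le : exp (-(τ * (y - x))) ≤ 1 := exp_le_one_iff.2 (by nlinarith)
  have hdiff : exp (-τ * x) - exp (-τ * y) ≤ τ * (y - x) := calc
    _ = exp (-τ * x) * (1 - exp (-(τ * (y - x)))) := by rw [hsplit]; ring
    _ ≤ 1 * (τ * (y - x)) := mul_le_mul hexp_le hgap (by linarith) zero_le_one
    _ = τ * (y - x) := one_mul _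
  simp only [epidemicField]
  nlinarith

lemma epidemicField_le_epidemicField (hS₀ : 0 ≤ S₀) (hτ : 0 ≤ τ) (h1 : I₀ ≤ I₀')
    (h2 : S₀ ≤ S₀') (h3 : τ ≤ τ') (h4 : ν' ≤ ν) (hx : 0 ≤ x) :
    epidemicField I₀ S₀ τ ν x ≤ epidemicField I₀' S₀' τ' ν' x := by
  have : exp (-τ' * x) ≤ exp (-τ * x) := exp_le_exp.2 (by nlinarith)
  have : exp (-τ' * x) ≤ 1 := exp_le_one_iff.2 (by nlinarith)
  simp only [epidemicField]
  nlinarith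

lemma epidemicField_lt_epidemicField (hS₀ : 0 < S₀) (hτ : 0 < τ) (h1 : I₀ ≤ I₀')
    (h2 : S₀ ≤ S₀') (h3 : τ ≤ τ') (h4 : ν' ≤ ν) (hne : (I₀, S₀, τ, ν) ≠ (I₀', S₀', τ', ν'))
    (hx : 0 < x) : epidemicField I₀ S₀ τ ν x < epidemicField I₀' S₀' τ' ν' x := by
  have hexp_lt : exp (-τ' * x) < 1 := exp_lt_one_iff.2 (by nlinarith)
  have hexp_le : exp (-τ' * x) ≤ exp (-τ * x) := exp_le_exp.2 (by nlinarith)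
  have hdecomp : epidemicField I₀' S₀' τ' ν' x - epidemicField I₀ S₀ τ ν x =
      (I₀' - I₀) + (S₀' - S₀) * (1 - exp (-τ' * x)) + S₀ * (exp (-τ * x) - exp (-τ' * x))
        + (ν - ν') * x := by
    simp only [epidemicField]; ring
  have termS : 0 ≤ (S₀' - S₀) * (1 - exp (-τ' * x)) := by nlinarith
  have termτ : 0 ≤ S₀ * (exp (-τ * x) - exp (-τ' * x)) := by nlinarith
  have termν : 0 ≤ (ν - ν') * x := by nlinarith
  have hstrict : I₀ < I₀' ∨ S₀ < S₀' ∨ τ < τ' ∨ ν' < ν := by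
    by_contra! h
    exact hne (by rw [h1.antisymm h.1, h2.antisymm h.2.1, h3.antisymm h.2.2.1,
      h4.antisymm h.2.2.2])
  rcases hstrict with hI | hS | hτlt | hν
  · linarith
  · nlinarith
  · have : exp (-τ' * x) < exp (-τ * x) := exp_lt_exp.2 (by nlinarith)
    nlinarith
  · nlinarith

end Field

lemma hasDerivAt_exp_mul_mul {w : ℝ → ℝ} {w' ν s : ℝ} (hw : HasDerivAt w w' s) :
    HasDerivAt (fun r => exp (ν * r) * w r) (exp (ν * s) * (w' + ν * w s)) s := by
  have hexp : HasDerivAt (fun r => exp (ν * r)) (exp (ν * s) * ν) s := by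
    simpa using ((hasDerivAt_id s).const_mul ν).exp
  exact (hexp.mul hw).congr_deriv (by ring)

lemma strictMonoOn_Icc_of_hasDerivAt_pos {u u' : ℝ → ℝ} {a b : ℝ}
    (hu : ∀ s ∈ Icc a b, HasDerivAt u (u' s) s) (hpos : ∀ s ∈ Ioo a b, 0 < u' s) :
    StrictMonoOn u (Icc a b) := by
  refine strictMonoOn_of_hasDerivWithinAt_pos (convex_Icc a b)
    (fun s hs => (hu s hs).continuousAt.continuousWithinAt) ?_ (by rwa [interior_Icc])
  rw [interior_Icc]
  exact fun s hs => (hu s (Ioo_subset_Icc_self hs)).hasDerivWithinAt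

theorem le_of_hasDerivAt_comparison {F G f g : ℝ → ℝ} {S : Set ℝ} {K a b : ℝ}
    (hF : ∀ x ∈ S, ∀ y, x ≤ y → F y - F x ≤ K * (y - x)) (hFG : ∀ x ∈ S, F x ≤ G x)
    (hf : ∀ s ∈ Icc a b, HasDerivAt f (F (f s)) s)
    (hg : ∀ s ∈ Icc a b, HasDerivAt g (G (g s)) s)
    (hgS : ∀ s ∈ Ico a b, g s ∈ S) (ha : f a ≤ g a) : ∀ s ∈ Icc a b, f s ≤ g s := by
  intro s hs
  -- `g + ε e^{(K+1)(s-a)}` is a strict upper fence for `f`.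
  have hfence : ∀ ε > 0, f s ≤ g s + ε * exp ((K + 1) * (s - a)) := by
    intro ε hε
    have hpert : ∀ x, HasDerivAt (fun x => ε * exp ((K + 1) * (x - a)))
        ((K + 1) * (ε * exp ((K + 1) * (x - a)))) x := fun x => by
      have := ((((hasDerivAt_id' x).sub_const a).const_mul (K + 1)).exp.const_mul ε)
      exact this.congr_deriv (by ring)
    refine image_le_of_deriv_right_lt_deriv_boundary' (f' := fun x => F (f x))
      (B := fun x => g x + ε * exp ((K + 1) * (x - a)))
      (B' := fun x => G (g x) + (K + 1) * (ε * exp ((K + 1) * (x - a))))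
      (fun x hx => (hf x hx).continuousAt.continuousWithinAt)
      (fun x hx => (hf x (Ico_subset_Icc_self hx)).hasDerivWithinAt)
      (by simp only [sub_self, mul_zero, exp_zero, mul_one]; linarith)
      (fun x hx => ((hg x hx).add (hpert x)).continuousAt.continuousWithinAt)
      (fun x hx => ((hg x (Ico_subset_Icc_self hx)).add (hpert x)).hasDerivWithinAt) ?_ hs
    intro x hx hfx
    set d := ε * exp ((K + 1) * (x - a))
    have hd : 0 < d := by positivity
    have hlip := hF (g x) (hgS x hx) (g x + d) (by linarith)
    have hle := hFG (g x) (hgS x hx)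
    simp only [hfx]
    nlinarith
  refine le_of_forall_pos_le_add fun ε hε => ?_
  have hC := exp_pos ((K + 1) * (s - a))
  simpa [div_mul_cancel₀ ε hC.ne'] using hfence (ε / exp ((K + 1) * (s - a))) (by positivity)

section Solution

variable {t₀ t I₀ S₀ τ ν : ℝ} {𝓘 : ℝ → ℝ}

lemma epidemic_solution_nonneg (hI₀ : 0 < I₀) (h0 : 𝓘 t₀ = 0)
    (h : ∀ s ∈ Icc t₀ t, HasDerivAt 𝓘 (epidemicField I₀ S₀ τ ν (𝓘 s)) s) :
    ∀ s ∈ Icc t₀ t, 0 ≤ 𝓘 s := by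
  refine fun s hs => image_le_of_deriv_right_lt_deriv_boundary' (f' := fun _ => 0)
    continuousOn_const (fun x _ => hasDerivWithinAt_const x _ 0) h0.ge
    (fun x hx => (h x hx).continuousAt.continuousWithinAt)
    (fun x hx => (h x (Ico_subset_Icc_self hx)).hasDerivWithinAt) ?_ hs
  intro x _ hx
  simpa [epidemicField, ← hx] using hI₀

lemma epidemic_solution_pos (hI₀ : 0 < I₀) (hS₀ : 0 ≤ S₀) (hτ : 0 ≤ τ) (h0 : 𝓘 t₀ = 0)
    (h : ∀ s ∈ Icc t₀ t, HasDerivAt 𝓘 (epidemicField I₀ S₀ τ ν (𝓘 s)) s) :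
    ∀ s ∈ Ioc t₀ t, 0 < 𝓘 s := by
  intro s hs
  have hsub : Icc t₀ s ⊆ Icc t₀ t := Icc_subset_Icc_right hs.2
  have hnonneg := epidemic_solution_nonneg hI₀ h0 h
  have hmono := strictMonoOn_Icc_of_hasDerivAt_pos (u := fun r => exp (ν * r) * 𝓘 r)
    (fun r hr => hasDerivAt_exp_mul_mul (h r (hsub hr)))
    (fun r hr => mul_pos (exp_pos _)
      (epidemicField_add_mul_pos hI₀ hS₀ hτ (hnonneg r (hsub (Ioo_subset_Icc_self hr)))))
  have hlt := hmono (left_mem_Icc.2 hs.1.le) (right_mem_Icc.2 hs.1.le) hs.1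
  simp only [h0, mul_zero] at hlt
  exact (mul_pos_iff_of_pos_left (exp_pos _)).1 hlt

end Solution

theorem stmt_4_general (t₀ t : ℝ) (ht : t₀ < t)
    (I₀ S₀ τ ν I₀' S₀' τ' ν' : ℝ)
    (hS₀ : 0 < S₀) (hτ : 0 < τ)
    (hI₀' : 0 < I₀') (hS₀' : 0 < S₀') (hτ' : 0 < τ')
    (h1 : I₀ ≤ I₀') (h2 : S₀ ≤ S₀') (h3 : τ ≤ τ') (h4 : ν' ≤ ν)
    (hne : (I₀, S₀, τ, ν) ≠ (I₀', S₀', τ', ν'))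
    (𝓘₁ 𝓘₂ : ℝ → ℝ)
    (h𝓘₁0 : 𝓘₁ t₀ = 0) (h𝓘₂0 : 𝓘₂ t₀ = 0)
    (h𝓘₁ : ∀ s ∈ Set.Icc t₀ t,
      HasDerivAt 𝓘₁ (I₀ + S₀ * (1 - Real.exp (-τ * 𝓘₁ s)) - ν * 𝓘₁ s) s)
    (h𝓘₂ : ∀ s ∈ Set.Icc t₀ t,
      HasDerivAt 𝓘₂ (I₀' + S₀' * (1 - Real.exp (-τ' * 𝓘₂ s)) - ν' * 𝓘₂ s) s) :
    𝓘₁ t < 𝓘₂ t := by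
  have hnonneg₂ := epidemic_solution_nonneg hI₀' h𝓘₂0 h𝓘₂
  have hpos₂ := epidemic_solution_pos hI₀' hS₀'.le hτ'.le h𝓘₂0 h𝓘₂
  have hle : ∀ s ∈ Icc t₀ t, 𝓘₁ s ≤ 𝓘₂ s :=
    le_of_hasDerivAt_comparison (S := Ici 0)
      (fun _ hx _ hxy => epidemicField_sub_le (I₀ := I₀) (ν := ν) hS₀.le hτ.le hx hxy)
      (fun _ hx => epidemicField_le_epidemicField hS₀.le hτ.le h1 h2 h3 h4 hx) h𝓘₁ h𝓘₂
      (fun s hs => hnonneg₂ s (Ico_subset_Icc_self hs)) (by rw [h𝓘₁0, h𝓘₂0])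
  have hmono := strictMonoOn_Icc_of_hasDerivAt_pos (u := fun s => exp (ν * s) * (𝓘₂ s - 𝓘₁ s))
    (fun s hs => hasDerivAt_exp_mul_mul ((h𝓘₂ s hs).sub (h𝓘₁ s hs))) fun s hs => by
      have hF := epidemicField_lt_epidemicField hS₀ hτ h1 h2 h3 h4 hne
        (hpos₂ s (Ioo_subset_Ioc_self hs))
      have hG := epidemicField_add_mul_mono (I₀ := I₀) (ν := ν) hS₀.le hτ.le
        (hle s (Ioo_subset_Icc_self hs))
      exact mul_pos (exp_pos _) (by simp only [epidemicField] at hF hG ⊢; linarith)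
  have hlt := hmono (left_mem_Icc.2 ht.le) (right_mem_Icc.2 ht.le) ht
  simp only [h𝓘₁0, h𝓘₂0, sub_self, mul_zero] at hlt
  exact sub_pos.1 ((mul_pos_iff_of_pos_left (exp_pos _)).1 hlt)

/-- Monotonicity of the cumulative number of infectious with respect to the
parameters: if `𝓘₁` and `𝓘₂` solve `𝓘' = I₀ + S₀(1 − exp(−τ𝓘)) − ν𝓘`, `𝓘 t₀ = 0`,
with parameters `(I₀, S₀, τ, ν)` and `(I₀', S₀', τ', ν')` respectively, where
`I₀ ≤ I₀'`, `S₀ ≤ S₀'`, `τ ≤ τ'`, `ν' ≤ ν` and the parameter vectors differ,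
then `𝓘₁ t < 𝓘₂ t` for every fixed `t > t₀`. -/
theorem stmt_4 (t₀ t : ℝ) (ht : t₀ < t)
    (I₀ S₀ τ ν I₀' S₀' τ' ν' : ℝ)
    (hI₀ : 0 < I₀) (hS₀ : 0 < S₀) (hτ : 0 < τ) (hν : 0 < ν)
    (hI₀' : 0 < I₀') (hS₀' : 0 < S₀') (hτ' : 0 < τ') (hν' : 0 < ν')
    (h1 : I₀ ≤ I₀') (h2 : S₀ ≤ S₀') (h3 : τ ≤ τ') (h4 : ν' ≤ ν)
    (hne : (I₀, S₀, τ, ν) ≠ (I₀', S₀', τ', ν'))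
    (𝓘₁ 𝓘₂ : ℝ → ℝ)
    (h𝓘₁0 : 𝓘₁ t₀ = 0) (h𝓘₂0 : 𝓘₂ t₀ = 0)
    (h𝓘₁ : ∀ s ∈ Set.Icc t₀ t,
      HasDerivAt 𝓘₁ (I₀ + S₀ * (1 - Real.exp (-τ * 𝓘₁ s)) - ν * 𝓘₁ s) s)
    (h𝓘₂ : ∀ s ∈ Set.Icc t₀ t,
      HasDerivAt 𝓘₂ (I₀' + S₀' * (1 - Real.exp (-τ' * 𝓘₂ s)) - ν' * 𝓘₂ s) s) :
    𝓘₁ t < 𝓘₂ t :=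
  stmt_4_general t₀ t ht I₀ S₀ τ ν I₀' S₀' τ' ν' hS₀ hτ hI₀' hS₀' hτ' h1 h2 h3 h4 hne 𝓘₁ 𝓘₂ h𝓘₁0
    h𝓘₂0 h𝓘₁ h𝓘₂
end

section
/- (Theorem 6.2, forward direction) Let S₀, ν, f, I₀ > 0 and CR₀ ≥ 0, and let (S, I) solve S' = −τ(t)SI, I' = τ(t)SI − νI with S(t₀)=S₀, I(t₀)=I₀, for a continuous τ. If R̂(t) := CR₀ + νf∫_{t₀}^t I(s)ds, then for all t ≥ t₀ with the denominator positive, τ(t) = νf(R̂''(t)/R̂'(t) + ν) / (νf(I₀+S₀) − R̂'(t) − ν(R̂(t) − CR₀)). -/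
open intervalIntegral

/-- (Theorem 6.2, forward direction.) For the SI system with time-dependent
transmission rate `τ`, if `R̂ t = CR₀ + νf ∫_{t₀}^t I`, then for all `t ≥ t₀`
(with the denominator positive),
`τ t = νf (R̂'' t / R̂' t + ν) / (νf (I₀+S₀) − R̂' t − ν (R̂ t − CR₀))`. -/
theorem stmt_8 (S₀ ν f I₀ CR₀ t₀ : ℝ)
    (hS₀ : 0 < S₀) (hν : 0 < ν) (hf : 0 < f) (hI₀ : 0 < I₀) (hCR₀ : 0 ≤ CR₀)
    (τ S I Rhat Rhat' Rhat'' : ℝ → ℝ) (hτc : Continuous τ) (hIc : Continuous I)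
    (hS : ∀ t : ℝ, t₀ ≤ t → HasDerivAt S (-(τ t * S t * I t)) t)
    (hI : ∀ t : ℝ, t₀ ≤ t → HasDerivAt I (τ t * S t * I t - ν * I t) t)
    (hS0 : S t₀ = S₀) (hI0 : I t₀ = I₀)
    (hRhat : ∀ t : ℝ, t₀ ≤ t → Rhat t = CR₀ + ν * f * ∫ s in t₀..t, I s)
    (hRhat' : ∀ t : ℝ, t₀ ≤ t → HasDerivAt Rhat (Rhat' t) t)
    (hRhat'' : ∀ t : ℝ, t₀ ≤ t → HasDerivAt Rhat' (Rhat'' t) t)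
    (hpos : ∀ t : ℝ, t₀ ≤ t → 0 < Rhat' t)
    (hden : ∀ t : ℝ, t₀ ≤ t →
      0 < ν * f * (I₀ + S₀) - Rhat' t - ν * (Rhat t - CR₀)) :
    ∀ t : ℝ, t₀ ≤ t →
      τ t = ν * f * (Rhat'' t / Rhat' t + ν) /
        (ν * f * (I₀ + S₀) - Rhat' t - ν * (Rhat t - CR₀)) := by
  intro t ht
  have hint : ∀ u : ℝ, HasDerivAt (fun x => ∫ s in t₀..x, I s) (I u) u := by
    intro u
    exact intervalIntegral.integral_hasDerivAt_right (hIc.intervalIntegrable _ _)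
      (hIc.stronglyMeasurableAtFilter _ _) hIc.continuousAt
  have hF : ∀ u : ℝ, HasDerivAt (fun x => CR₀ + ν * f * ∫ s in t₀..x, I s)
      (ν * f * I u) u := fun u => ((hint u).const_mul (ν * f)).const_add CR₀
  have hR'eq : ∀ u : ℝ, t₀ ≤ u → Rhat' u = ν * f * I u := by
    intro u hu
    have h1 : HasDerivWithinAt Rhat (Rhat' u) (Set.Ici t₀) u :=
      (hRhat' u hu).hasDerivWithinAt
    have h2 : HasDerivWithinAt Rhat (ν * f * I u) (Set.Ici t₀) u :=
      (hF u).hasDerivWithinAt.congr (fun x hx => hRhat x hx) (hRhat u hu)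
    have hu' : UniqueDiffWithinAt ℝ (Set.Ici t₀) u := uniqueDiffOn_Ici t₀ u hu
    rw [← h1.derivWithin hu', h2.derivWithin hu']
  have hIpos : 0 < I t := by
    have h := hpos t ht
    rw [hR'eq t ht] at h
    nlinarith [mul_pos hν hf]
  have hR''eq : Rhat'' t = ν * f * (τ t * S t * I t - ν * I t) := by
    have h1 : HasDerivWithinAt Rhat' (Rhat'' t) (Set.Ici t₀) t :=
      (hRhat'' t ht).hasDerivWithinAt
    have hG : HasDerivAt (fun x => ν * f * I x)
        (ν * f * (τ t * S t * I t - ν * I t)) t := (hI t ht).const_mul (ν * f)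
    have h2 : HasDerivWithinAt Rhat' (ν * f * (τ t * S t * I t - ν * I t))
        (Set.Ici t₀) t :=
      hG.hasDerivWithinAt.congr (fun x hx => hR'eq x hx) (hR'eq t ht)
    have hu' : UniqueDiffWithinAt ℝ (Set.Ici t₀) t := uniqueDiffOn_Ici t₀ t ht
    rw [← h1.derivWithin hu', h2.derivWithin hu']
  have hcons : S t + I t + ν * ∫ s in t₀..t, I s = S₀ + I₀ := by
    have key : ∀ x ∈ Set.Icc t₀ t,
        (fun x => S x + I x + ν * ∫ s in t₀..x, I s) x
          = (fun x => S x + I x + ν * ∫ s in t₀..x, I s) t₀ := by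
      apply constant_of_has_deriv_right_zero
      · intro x hx
        exact (((hS x hx.1).add (hI x hx.1)).add
          ((hint x).const_mul ν)).continuousAt.continuousWithinAt
      · intro x hx
        have h := ((hS x hx.1).add (hI x hx.1)).add ((hint x).const_mul ν)
        have he : -(τ x * S x * I x) + (τ x * S x * I x - ν * I x) + ν * I x = 0 := by
          ring
        rw [he] at h
        exact h.hasDerivWithinAt
    have h := key t ⟨ht, le_refl t⟩
    simp only [intervalIntegral.integral_same, mul_zero, add_zero, hS0, hI0] at h
    linarith [h]
  have hdeneq : ν * f * (I₀ + S₀) - Rhat' t - ν * (Rhat t - CR₀) = ν * f * S t := by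
    rw [hR'eq t ht, hRhat t ht]
    linear_combination (-(ν * f)) * hcons
  have hSpos : 0 < S t := by
    have h := hden t ht
    rw [hdeneq] at h
    nlinarith [mul_pos hν hf]
  rw [hdeneq, hR''eq, hR'eq t ht]
  have h1 : ν * f * I t ≠ 0 := by positivity
  have h2 : ν * f * S t ≠ 0 := by positivity
  field_simp
  ring
end

section
/- (Key identity in proof of Theorem 6.2) For the SI system with time-dependent τ, setting 𝓘(t) = ∫_{t₀}^t I(σ)dσ, one has S₀ exp(−∫_{t₀}^t τ(σ)I(σ)dσ) = I₀ + S₀ − I(t) − ν𝓘(t) for all t ≥ t₀, and consequently τ(t)I(t) = (I'(t) + νI(t)) / (I₀ + S₀ − I(t) − ν𝓘(t)) whenever the denominator is nonzero. -/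
/-!
Along the flow, `S t · exp (∫_{t₀}^t τ I)` and `S t + I t + ν ∫_{t₀}^t I` both have zero derivative,
so they keep their values `S₀` and `S₀ + I₀` at `t₀`. Eliminating `S t` between the two conservation
laws gives the identity; the formula for `τ I` is `τ S I / S` with `S t` read off from the identity.
-/

lemma eq_of_hasDerivAt_zero_of_le {E : Type*} [NormedAddCommGroup E] [NormedSpace ℝ E]
    {f : ℝ → E} {a b : ℝ} (hf : ∀ u, a ≤ u → HasDerivAt f 0 u) (hab : a ≤ b) : f b = f a :=
  constant_of_has_deriv_right_zero
    (fun u hu => (hf u hu.1).continuousAt.continuousWithinAt)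
    (fun u hu => (hf u hu.1).hasDerivWithinAt) b (Set.right_mem_Icc.2 hab)

namespace SIModel

variable {ν t₀ : ℝ} {τ S I : ℝ → ℝ}

theorem S_mul_exp_integral_eq (hτc : Continuous τ) (hIc : Continuous I)
    (hS : ∀ t, t₀ ≤ t → HasDerivAt S (-(τ t * S t * I t)) t) {t : ℝ} (ht : t₀ ≤ t) :
    S t * Real.exp (∫ σ in t₀..t, τ σ * I σ) = S t₀ := by
  have hτI : Continuous fun σ => τ σ * I σ := hτc.mul hIc
  have hderiv : ∀ u, t₀ ≤ u →
      HasDerivAt (fun u => S u * Real.exp (∫ σ in t₀..u, τ σ * I σ)) 0 u := fun u hu =>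
    ((hS u hu).mul (hτI.integral_hasStrictDerivAt t₀ u).hasDerivAt.exp).congr_deriv
      (by ring)
  simpa using eq_of_hasDerivAt_zero_of_le hderiv ht

theorem S_add_I_add_integral_eq (hIc : Continuous I)
    (hS : ∀ t, t₀ ≤ t → HasDerivAt S (-(τ t * S t * I t)) t)
    (hI : ∀ t, t₀ ≤ t → HasDerivAt I (τ t * S t * I t - ν * I t) t) {t : ℝ} (ht : t₀ ≤ t) :
    S t + I t + ν * ∫ σ in t₀..t, I σ = S t₀ + I t₀ := by
  have hderiv : ∀ u, t₀ ≤ u →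
      HasDerivAt (fun u => S u + I u + ν * ∫ σ in t₀..u, I σ) 0 u := fun u hu =>
    (((hS u hu).add (hI u hu)).add
      ((hIc.integral_hasStrictDerivAt t₀ u).hasDerivAt.const_mul ν)).congr_deriv (by ring)
  simpa using eq_of_hasDerivAt_zero_of_le hderiv ht

theorem S_eq_mul_exp_neg_integral (hτc : Continuous τ) (hIc : Continuous I)
    (hS : ∀ t, t₀ ≤ t → HasDerivAt S (-(τ t * S t * I t)) t) {t : ℝ} (ht : t₀ ≤ t) :
    S t = S t₀ * Real.exp (-∫ σ in t₀..t, τ σ * I σ) := by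
  rw [← S_mul_exp_integral_eq hτc hIc hS ht, Real.exp_neg,
    mul_inv_cancel_right₀ (Real.exp_ne_zero _)]

end SIModel

open SIModel in
theorem stmt_9_general (ν S₀ I₀ t₀ : ℝ)
    (τ S I : ℝ → ℝ) (hτc : Continuous τ) (hIc : Continuous I)
    (hS : ∀ t : ℝ, t₀ ≤ t → HasDerivAt S (-(τ t * S t * I t)) t)
    (hI : ∀ t : ℝ, t₀ ≤ t → HasDerivAt I (τ t * S t * I t - ν * I t) t)
    (hS0 : S t₀ = S₀) (hI0 : I t₀ = I₀) :
    ∀ t : ℝ, t₀ ≤ t →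
      (S₀ * Real.exp (-∫ σ in t₀..t, τ σ * I σ)
          = I₀ + S₀ - I t - ν * ∫ σ in t₀..t, I σ) ∧
      ((I₀ + S₀ - I t - ν * ∫ σ in t₀..t, I σ) ≠ 0 →
        τ t * I t = ((τ t * S t * I t - ν * I t) + ν * I t) /
          (I₀ + S₀ - I t - ν * ∫ σ in t₀..t, I σ)) := by
  intro t ht
  have hSt : S t = S₀ * Real.exp (-∫ σ in t₀..t, τ σ * I σ) :=
    hS0 ▸ S_eq_mul_exp_neg_integral hτc hIc hS ht
  have hsum := S_add_I_add_integral_eq hIc hS hI ht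
  have hkey : S₀ * Real.exp (-∫ σ in t₀..t, τ σ * I σ)
      = I₀ + S₀ - I t - ν * ∫ σ in t₀..t, I σ := by
    rw [← hSt]
    linarith
  refine ⟨hkey, fun hne => ?_⟩
  rw [← hkey, ← hSt] at hne ⊢
  field_simp
  ring

/-- (Key identity in the proof of Theorem 6.2.) For the SI system with
time-dependent `τ`, with `𝓘 t = ∫_{t₀}^t I`, one has
`S₀ exp (−∫_{t₀}^t τ I) = I₀ + S₀ − I t − ν 𝓘 t`, and consequently
`τ t * I t = (I' t + ν I t) / (I₀ + S₀ − I t − ν 𝓘 t)` whenever the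
denominator is nonzero. -/
theorem stmt_9 (ν S₀ I₀ t₀ : ℝ) (hν : 0 < ν) (hS₀ : 0 < S₀) (hI₀ : 0 < I₀)
    (τ S I : ℝ → ℝ) (hτc : Continuous τ) (hIc : Continuous I)
    (hS : ∀ t : ℝ, t₀ ≤ t → HasDerivAt S (-(τ t * S t * I t)) t)
    (hI : ∀ t : ℝ, t₀ ≤ t → HasDerivAt I (τ t * S t * I t - ν * I t) t)
    (hS0 : S t₀ = S₀) (hI0 : I t₀ = I₀) :
    ∀ t : ℝ, t₀ ≤ t →
      (S₀ * Real.exp (-∫ σ in t₀..t, τ σ * I σ)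
          = I₀ + S₀ - I t - ν * ∫ σ in t₀..t, I σ) ∧
      ((I₀ + S₀ - I t - ν * ∫ σ in t₀..t, I σ) ≠ 0 →
        τ t * I t = ((τ t * S t * I t - ν * I t) + ν * I t) /
          (I₀ + S₀ - I t - ν * ∫ σ in t₀..t, I σ)) :=
  stmt_9_general ν S₀ I₀ t₀ τ S I hτc hIc hS hI hS0 hI0
end

section
/- (Theorem A.1 / Theorem 8.1) Let A be a real n×n matrix with non-negative off-diagonal entries such that A + δI is non-negative and irreducible for large δ > 0. Suppose X₀ > 0 (componentwise nonnegative, nonzero), Y > 0, and the solution of X'(t) = AX(t), X(0) = X₀ satisfies ⟨Y, X(t)⟩ = χ₁ e^{χ₂ t} for all t ∈ [0, τ], where χ₁ > 0, τ > 0. Then χ₂ = s(A), the spectral bound (dominant eigenvalue) of A, and χ₁ = ⟨Y, ΠX₀⟩ where Π is the Perron projection onto the dominant eigenspace. -/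
/-!
The moments `Y ⬝ᵥ Aᵏ X₀` are the derivatives of `⟨Y, X t⟩` at `0`, hence equal `χ₁ χ₂ᵏ`;
they pass to every polynomial `p` as `χ₁ p(χ₂)`. Cayley–Hamilton then makes `χ₂` an eigenvalue
of `A`. On the other hand, for `B = A + δ` nonnegative and irreducible, positive entries of `Y`
and `X₀` can be joined to any entry of `Bᵏ`, so `Bᵏ = O((χ₂ + δ)ᵏ)` and no eigenvalue of `A` has
real part above `χ₂`; thus `χ₂ = s(A)`.

For the coefficient, `u = ⟨V_L, V_R⟩ X₀ - ⟨V_L, X₀⟩ V_R` has moments `κ χ₂ᵏ` with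
`κ = χ₁ ⟨V_L, V_R⟩ - ⟨Y, V_R⟩⟨V_L, X₀⟩`. If `κ ≠ 0`, the cyclic space of `u` contains an
eigenvector for `χ₂`, which is orthogonal to `V_L` because `u` is; but by Perron–Frobenius every
such eigenvector is a multiple of `V_R`, and `⟨V_L, V_R⟩ > 0`. Hence `κ = 0`.
-/

open Matrix

/-- A nonnegative square matrix is irreducible when every node can reach every
node through the associated directed graph, i.e. some power has a positive
`(i,j)` entry for every `i, j`. -/
def MatIrred {n : ℕ} (B : Matrix (Fin n) (Fin n) ℝ) : Prop :=
  ∀ i j : Fin n, ∃ m : ℕ, 0 < (B ^ m) i j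

/-- The spectral bound of a real matrix: the supremum of the real parts of its
complex eigenvalues. -/
noncomputable def spectralBound {n : ℕ} (A : Matrix (Fin n) (Fin n) ℝ) : ℝ :=
  sSup {x : ℝ | ∃ μ ∈ spectrum ℂ (A.map (Complex.ofReal ·)), μ.re = x}

open Polynomial

namespace Matrix

section

variable {ι R : Type*} [Fintype ι] [DecidableEq ι]

theorem pow_mulVec_of_mulVec_eq_smul [CommSemiring R] {M : Matrix ι ι R} {v : ι → R} {r : R}
    (h : M *ᵥ v = r • v) (k : ℕ) : M ^ k *ᵥ v = r ^ k • v := by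
  induction k with
  | zero => simp
  | succ k ih => rw [pow_succ', ← mulVec_mulVec, ih, mulVec_smul, h, smul_smul, pow_succ]

theorem vecMul_pow_of_vecMul_eq_smul [CommSemiring R] {M : Matrix ι ι R} {v : ι → R} {r : R}
    (h : v ᵥ* M = r • v) (k : ℕ) : v ᵥ* M ^ k = r ^ k • v := by
  rw [← mulVec_transpose, transpose_pow]
  exact pow_mulVec_of_mulVec_eq_smul (by rwa [mulVec_transpose]) k

theorem dotProduct_aeval_mulVec [CommRing R] {M : Matrix ι ι R} {x y : ι → R} {c r : R}
    (h : ∀ k : ℕ, y ⬝ᵥ (M ^ k *ᵥ x) = c * r ^ k) (p : R[X]) :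
    y ⬝ᵥ (aeval M p *ᵥ x) = c * p.eval r := by
  induction p using Polynomial.induction_on' with
  | add p q hp hq => rw [map_add, add_mulVec, dotProduct_add, hp, hq, eval_add, mul_add]
  | monomial k a =>
    rw [aeval_monomial, Algebra.algebraMap_eq_smul_one, smul_mul_assoc, one_mul, smul_mulVec,
      dotProduct_smul, h, eval_monomial, smul_eq_mul]
    ring

theorem isRoot_charpoly_of_dotProduct_pow_mulVec [CommRing R] [IsDomain R] {M : Matrix ι ι R}
    {x y : ι → R} {c r : R} (hc : c ≠ 0) (h : ∀ k : ℕ, y ⬝ᵥ (M ^ k *ᵥ x) = c * r ^ k) :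
    M.charpoly.IsRoot r := by
  have := dotProduct_aeval_mulVec h M.charpoly
  rw [aeval_self_charpoly, zero_mulVec, dotProduct_zero, eq_comm, mul_eq_zero] at this
  exact this.resolve_left hc

theorem dotProduct_add_smul_one_pow_mulVec [CommRing R] {M : Matrix ι ι R} {x y : ι → R}
    {c r : R} (h : ∀ k : ℕ, y ⬝ᵥ (M ^ k *ᵥ x) = c * r ^ k) (d : R) (k : ℕ) :
    y ⬝ᵥ ((M + d • 1) ^ k *ᵥ x) = c * (r + d) ^ k := by
  have := dotProduct_aeval_mulVec h ((X + C d) ^ k)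
  rwa [map_pow, map_add, aeval_X, aeval_C, Algebra.algebraMap_eq_smul_one, eval_pow, eval_add,
    eval_X, eval_C] at this

theorem add_smul_one_mulVec_of_mulVec_eq_smul [CommSemiring R] {M : Matrix ι ι R} {v : ι → R}
    {r : R} (h : M *ᵥ v = r • v) (d : R) : (M + d • 1) *ᵥ v = (r + d) • v := by
  rw [add_mulVec, smul_mulVec, one_mulVec, h, add_smul]

theorem aeval_X_sub_C_mul_mulVec [CommRing R] (M : Matrix ι ι R) (x : ι → R) (r : R) (p : R[X]) :
    aeval M ((X - C r) * p) *ᵥ x = M *ᵥ (aeval M p *ᵥ x) - r • (aeval M p *ᵥ x) := by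
  rw [map_mul, map_sub, aeval_X, aeval_C, Algebra.algebraMap_eq_smul_one, sub_mul, smul_mul_assoc,
    one_mul, sub_mulVec, smul_mulVec, mulVec_mulVec]

theorem exists_aeval_mulVec_eigenvector [Field R] {M : Matrix ι ι R} {x y : ι → R} {c r : R}
    (hc : c ≠ 0) (h : ∀ k : ℕ, y ⬝ᵥ (M ^ k *ᵥ x) = c * r ^ k) :
    ∃ p : R[X], aeval M p *ᵥ x ≠ 0 ∧ M *ᵥ (aeval M p *ᵥ x) = r • aeval M p *ᵥ x := by
  -- With `charpoly M = (X - r) ^ m * g` and `g r ≠ 0`, the vectors `(M - r) ^ j g(M) x` are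
  -- nonzero at `j = 0` (their `y`-moment is `c * g r`) and vanish at `j = m`.
  obtain ⟨g, hχ, hg⟩ :=
    exists_eq_pow_rootMultiplicity_mul_and_not_dvd M.charpoly M.charpoly_monic.ne_zero r
  set z : ℕ → ι → R := fun j => aeval M ((X - C r) ^ j * g) *ᵥ x
  have hz₀ : z 0 ≠ 0 := by
    intro h0
    have := dotProduct_aeval_mulVec h g
    simp only [z, pow_zero, one_mul] at h0
    rw [h0, dotProduct_zero, eq_comm, mul_eq_zero] at this
    exact hg (dvd_iff_isRoot.2 (this.resolve_left hc))
  have hzm : z (M.charpoly.rootMultiplicity r) = 0 := by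
    simp only [z, ← hχ, aeval_self_charpoly, zero_mulVec]
  obtain ⟨j, hj, hj₁⟩ : ∃ j, z j ≠ 0 ∧ z (j + 1) = 0 := by
    by_contra! hz
    have : ∀ j, z j ≠ 0 := fun j => by
      induction j with
      | zero => exact hz₀
      | succ j ih => exact hz j ih
    exact this _ hzm
  refine ⟨(X - C r) ^ j * g, hj, ?_⟩
  rw [← sub_eq_zero, ← aeval_X_sub_C_mul_mulVec, ← mul_assoc, ← pow_succ']
  exact hj₁

theorem mul_dotProduct_eq_of_dotProduct_pow_mulVec [Field R] {M : Matrix ι ι R}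
    {x y vR vL : ι → R} {c r : R} (hR : M *ᵥ vR = r • vR) (hL : vL ᵥ* M = r • vL)
    (hd : vL ⬝ᵥ vR ≠ 0) (hsimple : ∀ z, M *ᵥ z = r • z → ∃ t : R, z = t • vR)
    (h : ∀ k : ℕ, y ⬝ᵥ (M ^ k *ᵥ x) = c * r ^ k) :
    c * (vL ⬝ᵥ vR) = (y ⬝ᵥ vR) * (vL ⬝ᵥ x) := by
  set u := (vL ⬝ᵥ vR) • x - (vL ⬝ᵥ x) • vR
  have hyu : ∀ k : ℕ, y ⬝ᵥ (M ^ k *ᵥ u) = (c * (vL ⬝ᵥ vR) - (y ⬝ᵥ vR) * (vL ⬝ᵥ x)) * r ^ k := by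
    intro k
    simp only [u, mulVec_sub, mulVec_smul, pow_mulVec_of_mulVec_eq_smul hR, dotProduct_sub,
      dotProduct_smul, h, smul_eq_mul]
    ring
  have hLu : ∀ k : ℕ, vL ⬝ᵥ (M ^ k *ᵥ u) = 0 * r ^ k := by
    intro k
    simp only [dotProduct_mulVec, vecMul_pow_of_vecMul_eq_smul hL, smul_dotProduct, u,
      dotProduct_sub, dotProduct_smul, smul_eq_mul]
    ring
  by_contra hne
  obtain ⟨p, hz, hMz⟩ := exists_aeval_mulVec_eigenvector (sub_ne_zero.2 hne) hyu
  obtain ⟨t, ht⟩ := hsimple _ hMz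
  have hLz := dotProduct_aeval_mulVec hLu p
  rw [ht, dotProduct_smul, zero_mul, smul_eq_mul, mul_eq_zero] at hLz
  exact hz (by rw [ht, hLz.resolve_right hd, zero_smul])

end

section

variable {ι R : Type*} [Fintype ι] [Semiring R] [PartialOrder R] [IsOrderedRing R]

theorem mul_le_dotProduct_of_nonneg {v w : ι → R} (hv : 0 ≤ v) (hw : 0 ≤ w) (i : ι) :
    v i * w i ≤ v ⬝ᵥ w :=
  Finset.single_le_sum (f := fun j => v j * w j) (fun j _ => mul_nonneg (hv j) (hw j))
    (Finset.mem_univ i)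

theorem mul_le_mulVec_apply_of_nonneg {M : Matrix ι ι R} {x : ι → R} (hM : ∀ i j, 0 ≤ M i j)
    (hx : 0 ≤ x) (i j : ι) : M i j * x j ≤ (M *ᵥ x) i :=
  mul_le_dotProduct_of_nonneg (hM i) hx j

theorem mul_le_mul_apply_of_nonneg {P Q : Matrix ι ι R} (hP : ∀ i j, 0 ≤ P i j)
    (hQ : ∀ i j, 0 ≤ Q i j) (i j k : ι) : P i j * Q j k ≤ (P * Q) i k :=
  mul_le_dotProduct_of_nonneg (hP i) (fun l => hQ l k) j

theorem mul_mul_le_dotProduct_mulVec_of_nonneg {M : Matrix ι ι R} {x y : ι → R}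
    (hM : ∀ i j, 0 ≤ M i j) (hx : 0 ≤ x) (hy : 0 ≤ y) (i j : ι) :
    y i * M i j * x j ≤ y ⬝ᵥ (M *ᵥ x) :=
  calc y i * M i j * x j = y i * (M i j * x j) := mul_assoc _ _ _
    _ ≤ y i * (M *ᵥ x) i :=
        mul_le_mul_of_nonneg_left (mul_le_mulVec_apply_of_nonneg hM hx i j) (hy i)
    _ ≤ y ⬝ᵥ (M *ᵥ x) := mul_le_dotProduct_of_nonneg hy
        (fun l => Finset.sum_nonneg fun m _ => mul_nonneg (hM l m) (hx m)) i

end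

section

variable {ι : Type*} [Fintype ι]

theorem hasDerivAt_dotProduct {X : ℝ → ι → ℝ} {X' : ι → ℝ} {t : ℝ}
    (hX : ∀ i, HasDerivAt (fun s => X s i) (X' i) t) (w : ι → ℝ) :
    HasDerivAt (fun s => w ⬝ᵥ X s) (w ⬝ᵥ X') t :=
  HasDerivAt.fun_sum fun i _ => (hX i).const_mul (w i)

theorem dotProduct_pow_mulVec_of_hasDerivAt [DecidableEq ι] {A : Matrix ι ι ℝ} {X : ℝ → ι → ℝ}
    {Y : ι → ℝ} {c r τ : ℝ} (hτ : 0 < τ)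
    (hode : ∀ t i, HasDerivAt (fun s => X s i) ((A *ᵥ X t) i) t)
    (hout : ∀ t ∈ Set.Icc 0 τ, Y ⬝ᵥ X t = c * Real.exp (r * t)) (k : ℕ) :
    Y ⬝ᵥ (A ^ k *ᵥ X 0) = c * r ^ k := by
  have hder : ∀ k t, HasDerivAt (fun s => Y ⬝ᵥ (A ^ k *ᵥ X s)) (Y ⬝ᵥ (A ^ (k + 1) *ᵥ X t)) t := by
    intro k t
    simp only [dotProduct_mulVec]
    convert hasDerivAt_dotProduct (hode t) (Y ᵥ* A ^ k) using 1
    rw [← dotProduct_mulVec, ← dotProduct_mulVec, mulVec_mulVec, pow_succ]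
  suffices ∀ t ∈ Set.Icc 0 τ, Y ⬝ᵥ (A ^ k *ᵥ X t) = c * r ^ k * Real.exp (r * t) by
    simpa using this 0 ⟨le_rfl, hτ.le⟩
  induction k with
  | zero => simpa using hout
  | succ k ih =>
    intro t ht
    have hexp : HasDerivAt (fun s => c * r ^ k * Real.exp (r * s))
        (c * r ^ (k + 1) * Real.exp (r * t)) t := by
      refine (((hasDerivAt_id t).const_mul r).exp.const_mul (c * r ^ k)).congr_deriv ?_
      simp only [id, mul_one]
      ring
    exact (uniqueDiffOn_Icc hτ t ht).eq_deriv _ (hder k t).hasDerivWithinAt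
      (hexp.hasDerivWithinAt.congr ih (ih t ht))

theorem norm_le_of_mem_spectrum_map_ofReal [DecidableEq ι] {B : Matrix ι ι ℝ} {r : ℝ}
    (hr : 0 < r) (hB : ∀ i j, ∃ C, ∀ k : ℕ, |(B ^ k) i j| ≤ C * r ^ k) {ν : ℂ}
    (hν : ν ∈ spectrum ℂ (B.map (Complex.ofReal ·))) : ‖ν‖ ≤ r := by
  rw [← spectrum_toLin', ← Module.End.hasEigenvalue_iff_mem_spectrum] at hν
  obtain ⟨v, hv, hv0⟩ := hν.exists_hasEigenvector
  rw [Module.End.mem_eigenspace_iff, toLin'_apply] at hv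
  obtain ⟨i, hi⟩ := Function.ne_iff.1 hv0
  choose C hC using hB
  set D := ∑ j, C i j * ‖v j‖
  have hbound : ∀ k : ℕ, ‖ν‖ ^ k * ‖v i‖ ≤ D * r ^ k := by
    intro k
    have hk := congrFun (pow_mulVec_of_mulVec_eq_smul hv k) i
    have hpow : (B.map (Complex.ofReal ·)) ^ k = (B ^ k).map (Complex.ofReal ·) :=
      (Matrix.map_pow B Complex.ofRealHom k).symm
    rw [hpow] at hk
    calc ‖ν‖ ^ k * ‖v i‖ = ‖∑ j, ((B ^ k) i j : ℂ) * v j‖ := by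
          rw [← norm_pow, ← norm_mul]; exact congrArg norm (hk.symm)
      _ ≤ ∑ j, |(B ^ k) i j| * ‖v j‖ := by
          refine (norm_sum_le _ _).trans_eq (Finset.sum_congr rfl fun j _ => ?_)
          rw [norm_mul, Complex.norm_real, Real.norm_eq_abs]
      _ ≤ D * r ^ k := by
          rw [Finset.sum_mul]
          refine Finset.sum_le_sum fun j _ => ?_
          rw [mul_right_comm]
          exact mul_le_mul_of_nonneg_right (hC i j k) (norm_nonneg _)
  by_contra! hlt
  obtain ⟨k, hk⟩ := pow_unbounded_of_one_lt (D / ‖v i‖) ((one_lt_div hr).2 hlt)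
  rw [div_pow, div_lt_div_iff₀ (norm_pos_iff.2 hi) (pow_pos hr k)] at hk
  exact (hbound k).not_gt hk

theorem add_mem_spectrum_map_ofReal_add_smul_one [DecidableEq ι] {A : Matrix ι ι ℝ} {μ : ℂ}
    (hμ : μ ∈ spectrum ℂ (A.map (Complex.ofReal ·))) (d : ℝ) :
    μ + d ∈ spectrum ℂ ((A + d • 1).map (Complex.ofReal ·)) := by
  have hmap : (A + d • 1).map (Complex.ofReal ·) =
      algebraMap ℂ (Matrix ι ι ℂ) d + A.map (Complex.ofReal ·) := by
    ext i j
    rcases eq_or_ne i j with rfl | hij <;> simp [algebraMap_matrix_apply, *, add_comm]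
  rwa [hmap, spectrum.add_mem_add_iff]

end

end Matrix

namespace MatIrred

variable {n : ℕ} {B : Matrix (Fin n) (Fin n) ℝ}

theorem eq_zero_of_nonneg_of_mulVec_eq_smul (hirr : MatIrred B) (hB : ∀ i j, 0 ≤ B i j)
    {w : Fin n → ℝ} {r : ℝ} (hw : 0 ≤ w) (hBw : B *ᵥ w = r • w) {i₀ : Fin n} (hi₀ : w i₀ = 0) :
    w = 0 := by
  funext j
  obtain ⟨m, hm⟩ := hirr i₀ j
  have h := mul_le_mulVec_apply_of_nonneg (pow_apply_nonneg hB m) hw i₀ j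
  rw [pow_mulVec_of_mulVec_eq_smul hBw, Pi.smul_apply, hi₀, smul_zero] at h
  exact le_antisymm (nonpos_of_mul_nonpos_right h hm) (hw j)

theorem exists_eq_smul_of_mulVec_eq_smul (hirr : MatIrred B) (hB : ∀ i j, 0 ≤ B i j)
    {v z : Fin n → ℝ} {r : ℝ} (hv : ∀ i, 0 < v i) (hBv : B *ᵥ v = r • v)
    (hBz : B *ᵥ z = r • z) : ∃ t : ℝ, z = t • v := by
  rcases isEmpty_or_nonempty (Fin n) with hn | hn
  · exact ⟨0, Subsingleton.elim _ _⟩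
  obtain ⟨i₀, hi₀⟩ := Finite.exists_min fun i => z i / v i
  refine ⟨z i₀ / v i₀, sub_eq_zero.1 (hirr.eq_zero_of_nonneg_of_mulVec_eq_smul hB
    (r := r) (i₀ := i₀) (fun i => ?_) ?_ ?_)⟩
  · have := (le_div_iff₀ (hv i)).1 (hi₀ i)
    simpa using this
  · rw [mulVec_sub, mulVec_smul, hBv, hBz, smul_sub, smul_comm]
  · simp [(hv i₀).ne']

theorem pow_apply_le_of_dotProduct_pow_mulVec (hirr : MatIrred B) (hB : ∀ i j, 0 ≤ B i j)
    {x y : Fin n → ℝ} (hx : 0 ≤ x) (hx₀ : x ≠ 0) (hy : 0 ≤ y) (hy₀ : y ≠ 0) {c r : ℝ}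
    (h : ∀ k : ℕ, y ⬝ᵥ (B ^ k *ᵥ x) = c * r ^ k) (i j : Fin n) :
    ∃ C, ∀ k : ℕ, (B ^ k) i j ≤ C * r ^ k := by
  obtain ⟨i₀, hi₀⟩ := Function.ne_iff.1 hy₀
  obtain ⟨j₀, hj₀⟩ := Function.ne_iff.1 hx₀
  obtain ⟨m₁, hm₁⟩ := hirr i₀ i
  obtain ⟨m₂, hm₂⟩ := hirr j j₀
  have hP : 0 < y i₀ * (B ^ m₁) i₀ i * (B ^ m₂) j j₀ * x j₀ :=
    mul_pos (mul_pos (mul_pos ((hy i₀).lt_of_ne' hi₀) hm₁) hm₂) ((hx j₀).lt_of_ne' hj₀)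
  refine ⟨c * r ^ (m₁ + m₂) / (y i₀ * (B ^ m₁) i₀ i * (B ^ m₂) j j₀ * x j₀), fun k => ?_⟩
  have hnn := pow_apply_nonneg hB
  -- the walk `i₀ → i → j → j₀` in the graph of `B`
  have hpath : (B ^ m₁) i₀ i * (B ^ k) i j * (B ^ m₂) j j₀ ≤ (B ^ (m₁ + k + m₂)) i₀ j₀ := by
    rw [pow_add, pow_add]
    refine le_trans (mul_le_mul_of_nonneg_right ?_ (hnn m₂ j j₀))
      (mul_le_mul_apply_of_nonneg ?_ (hnn m₂) i₀ j j₀)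
    · exact mul_le_mul_apply_of_nonneg (hnn m₁) (hnn k) i₀ i j
    · simpa only [← pow_add] using hnn (m₁ + k)
  rw [div_mul_eq_mul_div, le_div_iff₀ hP]
  calc (B ^ k) i j * (y i₀ * (B ^ m₁) i₀ i * (B ^ m₂) j j₀ * x j₀)
      = y i₀ * ((B ^ m₁) i₀ i * (B ^ k) i j * (B ^ m₂) j j₀) * x j₀ := by ring
    _ ≤ y i₀ * (B ^ (m₁ + k + m₂)) i₀ j₀ * x j₀ := by
        gcongr
        exacts [hx j₀, hy i₀]
    _ ≤ y ⬝ᵥ (B ^ (m₁ + k + m₂) *ᵥ x) := mul_mul_le_dotProduct_mulVec_of_nonneg (hnn _) hx hy _ _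
    _ = c * r ^ (m₁ + m₂) * r ^ k := by rw [h, add_right_comm, pow_add, mul_assoc]

end MatIrred

theorem stmt_12_general (n : ℕ) (A : Matrix (Fin n) (Fin n) ℝ)
    (hirr : ∃ δ₀ : ℝ, ∀ δ : ℝ, δ₀ ≤ δ →
      (∀ i j : Fin n, 0 ≤ (A + δ • (1 : Matrix (Fin n) (Fin n) ℝ)) i j) ∧
      MatIrred (A + δ • (1 : Matrix (Fin n) (Fin n) ℝ)))
    (X : ℝ → (Fin n → ℝ)) (X₀ Y : Fin n → ℝ)
    (hX₀ : (∀ i, 0 ≤ X₀ i) ∧ X₀ ≠ 0) (hY : (∀ i, 0 ≤ Y i) ∧ Y ≠ 0)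
    (hX0 : X 0 = X₀)
    (hode : ∀ (t : ℝ) (i : Fin n),
      HasDerivAt (fun s => X s i) ((A.mulVec (X t)) i) t)
    (χ₁ χ₂ τ : ℝ) (hχ₁ : 0 < χ₁) (hτ : 0 < τ)
    (hout : ∀ t ∈ Set.Icc (0 : ℝ) τ,
      (∑ i, Y i * X t i) = χ₁ * Real.exp (χ₂ * t)) :
    χ₂ = spectralBound A ∧
    ∀ V_R V_L : Fin n → ℝ,
      (∀ i, 0 < V_R i) → (∀ i, 0 < V_L i) →
      A.mulVec V_R = spectralBound A • V_R →
      A.transpose.mulVec V_L = spectralBound A • V_L →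
      χ₁ = (∑ i, Y i * V_R i) * (∑ i, V_L i * X₀ i) / (∑ i, V_L i * V_R i) := by
  obtain ⟨δ₀, hδ₀⟩ := hirr
  set δ := max δ₀ (1 - χ₂)
  obtain ⟨hB, hBirr⟩ := hδ₀ δ (le_max_left _ _)
  have hr : 0 < χ₂ + δ := by linarith [le_max_right δ₀ (1 - χ₂)]
  have hmom : ∀ k : ℕ, Y ⬝ᵥ (A ^ k *ᵥ X₀) = χ₁ * χ₂ ^ k :=
    hX0 ▸ dotProduct_pow_mulVec_of_hasDerivAt hτ hode hout
  have hgrowth : ∀ i j, ∃ C, ∀ k : ℕ, |((A + δ • 1) ^ k) i j| ≤ C * (χ₂ + δ) ^ k := fun i j =>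
    (hBirr.pow_apply_le_of_dotProduct_pow_mulVec hB hX₀.1 hX₀.2 hY.1 hY.2
      (dotProduct_add_smul_one_pow_mulVec hmom δ) i j).imp fun C hC k => by
        rw [abs_of_nonneg (pow_apply_nonneg hB k i j)]
        exact hC k
  have hs : spectralBound A = χ₂ := by
    refine IsGreatest.csSup_eq ⟨⟨χ₂, ?_, Complex.ofReal_re χ₂⟩, ?_⟩
    · change Complex.ofRealHom χ₂ ∈ spectrum ℂ (A.map Complex.ofRealHom)
      rw [mem_spectrum_iff_isRoot_charpoly, charpoly_map]
      exact (isRoot_charpoly_of_dotProduct_pow_mulVec hχ₁.ne' hmom).map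
    · rintro _ ⟨μ, hμ, rfl⟩
      have := norm_le_of_mem_spectrum_map_ofReal hr hgrowth
        (add_mem_spectrum_map_ofReal_add_smul_one hμ δ)
      have := Complex.re_le_norm (μ + δ)
      rw [Complex.add_re, Complex.ofReal_re] at this
      linarith
  refine ⟨hs.symm, fun V_R V_L hVR hVL hAVR hAVL => ?_⟩
  rw [hs] at hAVR hAVL
  have hsimple : ∀ z, A *ᵥ z = χ₂ • z → ∃ t : ℝ, z = t • V_R := fun z hz =>
    hBirr.exists_eq_smul_of_mulVec_eq_smul hB hVR (add_smul_one_mulVec_of_mulVec_eq_smul hAVR δ)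
      (add_smul_one_mulVec_of_mulVec_eq_smul hz δ)
  obtain ⟨i, -⟩ := Function.ne_iff.1 hY.2
  have hd : V_L ⬝ᵥ V_R ≠ 0 :=
    (Finset.sum_pos (fun j _ => mul_pos (hVL j) (hVR j)) ⟨i, Finset.mem_univ i⟩).ne'
  change χ₁ = Y ⬝ᵥ V_R * (V_L ⬝ᵥ X₀) / (V_L ⬝ᵥ V_R)
  rw [eq_div_iff hd]
  exact mul_dotProduct_eq_of_dotProduct_pow_mulVec hAVR (by rwa [← mulVec_transpose]) hd
    hsimple hmom

/-- (Theorem A.1 / Theorem 8.1.) Let `A` be a real `n × n` matrix with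
nonnegative off-diagonal entries such that `A + δ•1` is nonnegative and
irreducible for all large `δ`. If `X₀ > 0`, `Y > 0`, the solution of
`X' = A X`, `X 0 = X₀` satisfies `⟨Y, X t⟩ = χ₁ e^{χ₂ t}` on `[0, τ]` with
`χ₁ > 0`, `τ > 0`, then `χ₂ = s(A)` and `χ₁ = ⟨Y, Π X₀⟩` where
`Π x = ⟨V_L, x⟩ V_R / ⟨V_L, V_R⟩` is the Perron projection built from any
strictly positive right/left eigenvectors `V_R`, `V_L` of `A` for `s(A)`. -/
theorem stmt_12 (n : ℕ) (hn : 0 < n) (A : Matrix (Fin n) (Fin n) ℝ)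
    (hoffdiag : ∀ i j : Fin n, i ≠ j → 0 ≤ A i j)
    (hirr : ∃ δ₀ : ℝ, ∀ δ : ℝ, δ₀ ≤ δ →
      (∀ i j : Fin n, 0 ≤ (A + δ • (1 : Matrix (Fin n) (Fin n) ℝ)) i j) ∧
      MatIrred (A + δ • (1 : Matrix (Fin n) (Fin n) ℝ)))
    (X : ℝ → (Fin n → ℝ)) (X₀ Y : Fin n → ℝ)
    (hX₀ : (∀ i, 0 ≤ X₀ i) ∧ X₀ ≠ 0) (hY : (∀ i, 0 ≤ Y i) ∧ Y ≠ 0)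
    (hX0 : X 0 = X₀)
    (hode : ∀ (t : ℝ) (i : Fin n),
      HasDerivAt (fun s => X s i) ((A.mulVec (X t)) i) t)
    (χ₁ χ₂ τ : ℝ) (hχ₁ : 0 < χ₁) (hτ : 0 < τ)
    (hout : ∀ t ∈ Set.Icc (0 : ℝ) τ,
      (∑ i, Y i * X t i) = χ₁ * Real.exp (χ₂ * t)) :
    χ₂ = spectralBound A ∧
    ∀ V_R V_L : Fin n → ℝ,
      (∀ i, 0 < V_R i) → (∀ i, 0 < V_L i) →
      A.mulVec V_R = spectralBound A • V_R →
      A.transpose.mulVec V_L = spectralBound A • V_L →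
      χ₁ = (∑ i, Y i * V_R i) * (∑ i, V_L i * X₀ i) / (∑ i, V_L i * V_R i) :=
  stmt_12_general n A hirr X X₀ Y hX₀ hY hX0 hode χ₁ χ₂ τ hχ₁ hτ hout
end

section
/- (Remark 8.2) Let A be a real n×n matrix with nonnegative off-diagonal entries. Suppose there exist vectors x₀ > 0, y₀ > 0, z₀ > 0 such that the solution of x'(t) = Ax(t), x(0) = x₀ satisfies ⟨y₀, x(t)⟩ = χ₁e^{χ₂t} and ⟨z₀, x(t)⟩ = φ₁e^{φ₂t} on [0, τ] with χ₁, φ₁ > 0, τ > 0 and χ₂ ≠ φ₂. Then A is reducible (i.e., A is not irreducible). -/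
/-!
Shifting `A` to `B = A + c • 1` with `c` large makes `B` entrywise at least `1 + |A|`. If
`⟨w, x t⟩ = K e^{μ t}` on `[0, τ]`, differentiating `k` times and evaluating at `0` gives
`⟨w Bᵏ, x₀⟩ = K (μ + c)ᵏ`. Irreducibility makes some row of some power `B ^ M` positive, so
`y₀ B^M` is a positive vector and dominates `β z₀` for some `β > 0`. Comparing
`⟨z₀ Bᵏ, x₀⟩ = φ₁ (φ₂ + c)ᵏ` with `⟨y₀ B^{M+k}, x₀⟩ = χ₁ (χ₂ + c)^{M+k}` as `k → ∞` gives
`φ₂ ≤ χ₂`, and by symmetry `χ₂ = φ₂`.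
-/

open Matrix

/-- A real matrix is irreducible when the directed graph with an edge `i → j`
whenever `i ≠ j` and `A i j > 0` is strongly connected; equivalently, every
entry of some power of `1 + |A|` is positive. -/
def MatrixIrreducible {n : ℕ} (A : Matrix (Fin n) (Fin n) ℝ) : Prop :=
  ∀ i j : Fin n, ∃ m : ℕ,
    0 < (((1 : Matrix (Fin n) (Fin n) ℝ) + A.map (fun x => |x|)) ^ m) i j

open Filter Set Real Topology

namespace Matrix

section OrderedSemiring

variable {n R : Type*} [Semiring R] [PartialOrder R] [IsOrderedRing R]

lemma one_apply_nonneg [DecidableEq n] (i j : n) : 0 ≤ (1 : Matrix n n R) i j := by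
  rw [one_apply]
  split_ifs
  exacts [zero_le_one, le_rfl]

variable [Fintype n]

lemma vecMul_le_vecMul {m : Type*} {B : Matrix n m R} (hB : ∀ i j, 0 ≤ B i j) {u v : n → R}
    (huv : u ≤ v) : u ᵥ* B ≤ v ᵥ* B :=
  fun j => dotProduct_le_dotProduct_of_nonneg_right huv fun i => hB i j

lemma mul_apply_le_mul_apply {l m : Type*} {P Q : Matrix l n R} {P' Q' : Matrix n m R}
    (hP : ∀ i j, 0 ≤ P i j) (hP' : ∀ i j, 0 ≤ P' i j)
    (hPQ : ∀ i j, P i j ≤ Q i j) (hPQ' : ∀ i j, P' i j ≤ Q' i j) (i : l) (j : m) :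
    (P * P') i j ≤ (Q * Q') i j :=
  Finset.sum_le_sum fun k _ =>
    mul_le_mul (hPQ i k) (hPQ' k j) (hP' k j) ((hP i k).trans (hPQ i k))

variable [DecidableEq n]

lemma pow_apply_le_pow_apply {P Q : Matrix n n R}
    (hP : ∀ i j, 0 ≤ P i j) (hPQ : ∀ i j, P i j ≤ Q i j) (k : ℕ) (i j : n) :
    (P ^ k) i j ≤ (Q ^ k) i j := by
  induction k generalizing i j with
  | zero => rfl
  | succ k ih =>
    rw [pow_succ, pow_succ]
    exact mul_apply_le_mul_apply (pow_apply_nonneg hP k) hP ih hPQ i j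

lemma pow_apply_le_pow_apply_of_le {B : Matrix n n R} (hB : ∀ i j, (1 : Matrix n n R) i j ≤ B i j)
    {m M : ℕ} (hmM : m ≤ M) (i j : n) : (B ^ m) i j ≤ (B ^ M) i j := by
  have hB₀ : ∀ i j, 0 ≤ B i j := fun i j => (one_apply_nonneg i j).trans (hB i j)
  -- `B ^ M = B ^ m * B ^ (M - m)`, and `B ^ (M - m)` is entrywise at least `1 ^ (M - m) = 1`.
  have h := mul_apply_le_mul_apply (pow_apply_nonneg hB₀ m)
    (pow_apply_nonneg one_apply_nonneg (M - m)) (fun _ _ => le_rfl)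
    (pow_apply_le_pow_apply one_apply_nonneg hB (M - m)) i j
  rwa [one_pow, mul_one, ← pow_add, Nat.add_sub_cancel' hmM] at h

lemma exists_forall_pow_apply_pos {B : Matrix n n R} (hB : ∀ i j, (1 : Matrix n n R) i j ≤ B i j)
    {i : n} (h : ∀ j, ∃ m, 0 < (B ^ m) i j) : ∃ M, ∀ j, 0 < (B ^ M) i j := by
  choose m hm using h
  exact ⟨Finset.univ.sup m, fun j =>
    (hm j).trans_le (pow_apply_le_pow_apply_of_le hB (Finset.le_sup (Finset.mem_univ j)) i j)⟩

end OrderedSemiring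

lemma vecMul_apply_pos {n m R : Type*} [Fintype n] [Semiring R] [PartialOrder R]
    [IsStrictOrderedRing R] {B : Matrix n m R} (hB : ∀ i j, 0 ≤ B i j) {y : n → R} (hy : 0 ≤ y)
    {i : n} {j : m} (hyi : 0 < y i) (hBij : 0 < B i j) : 0 < (y ᵥ* B) j :=
  Finset.sum_pos' (fun l _ => mul_nonneg (hy l) (hB l j)) ⟨i, Finset.mem_univ i, mul_pos hyi hBij⟩

end Matrix

lemma exists_pos_smul_le {ι : Type*} [Finite ι] {v : ι → ℝ} (hv : ∀ i, 0 < v i) (w : ι → ℝ) :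
    ∃ β > (0 : ℝ), β • w ≤ v := by
  have hsmall : ∀ i, ∀ᶠ β : ℝ in 𝓝[>] 0, β * w i < v i := fun i =>
    (((continuous_mul_const (w i)).tendsto' 0 0 (zero_mul _)).eventually
      (gt_mem_nhds (hv i))).filter_mono nhdsWithin_le_nhds
  obtain ⟨β, hβ, hβw⟩ := (eventually_mem_nhdsWithin.and (eventually_all.2 hsmall)).exists
  exact ⟨β, mem_Ioi.1 hβ, fun i => (hβw i).le⟩

lemma le_of_forall_mul_pow_le_mul_pow {a b C D : ℝ} (ha : 0 < a) (hC : 0 < C)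
    (h : ∀ k : ℕ, C * b ^ k ≤ D * a ^ k) : b ≤ a := by
  by_contra! hab
  obtain ⟨k, hk⟩ := pow_unbounded_of_one_lt (D / C) ((one_lt_div ha).2 hab)
  rw [div_pow, div_lt_div_iff₀ hC (pow_pos ha k)] at hk
  linarith [h k]

section LinearODE

variable {ι : Type*} [Fintype ι] {A : Matrix ι ι ℝ} {x : ℝ → ι → ℝ}

lemma hasDerivAt_dotProduct_of_hasDerivAt_mulVec
    (hode : ∀ t i, HasDerivAt (fun s => x s i) ((A *ᵥ x t) i) t) (w : ι → ℝ) (t : ℝ) :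
    HasDerivAt (fun s => w ⬝ᵥ x s) ((w ᵥ* A) ⬝ᵥ x t) t := by
  rw [← dotProduct_mulVec]
  exact HasDerivAt.fun_sum fun i _ => (hode t i).const_mul (w i)

lemma dotProduct_vecMul_eq_of_eq_exp
    (hode : ∀ t i, HasDerivAt (fun s => x s i) ((A *ᵥ x t) i) t) {τ : ℝ} (hτ : 0 < τ)
    {w : ι → ℝ} {K μ : ℝ} (hw : ∀ t ∈ Icc 0 τ, w ⬝ᵥ x t = K * exp (μ * t)) :
    ∀ t ∈ Icc 0 τ, (w ᵥ* A) ⬝ᵥ x t = K * μ * exp (μ * t) := by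
  intro t ht
  have hexp : HasDerivAt (fun s => K * exp (μ * s)) (K * μ * exp (μ * t)) t := by
    simpa [mul_comm, mul_assoc, mul_left_comm] using
      ((hasDerivAt_id t).const_mul μ).exp.const_mul K
  have hout : HasDerivWithinAt (fun s => K * exp (μ * s)) ((w ᵥ* A) ⬝ᵥ x t) (Icc 0 τ) t :=
    (hasDerivAt_dotProduct_of_hasDerivAt_mulVec hode w t).hasDerivWithinAt.congr
      (fun s hs => (hw s hs).symm) (hw t ht).symm
  -- Derivatives within `[0, τ]` are unique, endpoints included.
  exact (uniqueDiffOn_Icc hτ t ht).eq_deriv _ hout hexp.hasDerivWithinAt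

lemma dotProduct_vecMul_add_smul_one_pow_eq_of_eq_exp [DecidableEq ι]
    (hode : ∀ t i, HasDerivAt (fun s => x s i) ((A *ᵥ x t) i) t) {τ : ℝ} (hτ : 0 < τ)
    {w : ι → ℝ} {K μ : ℝ} (hw : ∀ t ∈ Icc 0 τ, w ⬝ᵥ x t = K * exp (μ * t)) (c : ℝ) (k : ℕ) :
    ∀ t ∈ Icc 0 τ, (w ᵥ* (A + c • 1) ^ k) ⬝ᵥ x t = K * (μ + c) ^ k * exp (μ * t) := by
  induction k with
  | zero => simpa using hw
  | succ k ih =>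
    intro t ht
    rw [pow_succ, ← vecMul_vecMul, vecMul_add, vecMul_smul, vecMul_one, add_dotProduct,
      smul_dotProduct, dotProduct_vecMul_eq_of_eq_exp hode hτ ih t ht, smul_eq_mul, ih t ht]
    ring

end LinearODE

lemma eventually_one_add_map_abs_apply_le {ι : Type*} [Finite ι] [DecidableEq ι]
    {A : Matrix ι ι ℝ} (hA : ∀ i j, i ≠ j → 0 ≤ A i j) :
    ∀ᶠ c : ℝ in atTop, ∀ i j,
      ((1 : Matrix ι ι ℝ) + A.map (fun x => |x|)) i j ≤ (A + c • 1) i j := by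
  refine eventually_all.2 fun i => eventually_all.2 fun j => ?_
  rcases eq_or_ne i j with rfl | hij
  · filter_upwards [eventually_ge_atTop (1 + |A i i| - A i i)] with c hc
    simp only [Matrix.add_apply, map_apply, Matrix.smul_apply, one_apply_eq, smul_eq_mul, mul_one]
    linarith
  · refine Eventually.of_forall fun c => ?_
    simp [hij, abs_of_nonneg (hA i j hij)]

lemma rate_le_of_smul_le_vecMul_pow {ι : Type*} [Fintype ι] [DecidableEq ι] {B : Matrix ι ι ℝ}
    (hB : ∀ i j, 0 ≤ B i j) {x₀ y z : ι → ℝ} (hx₀ : 0 ≤ x₀) {M : ℕ} {β : ℝ} (hβ : 0 < β)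
    (hdom : β • z ≤ y ᵥ* B ^ M) {χ₁ φ₁ a b : ℝ} (hφ₁ : 0 < φ₁) (ha : 0 < a)
    (hy : ∀ k, (y ᵥ* B ^ k) ⬝ᵥ x₀ = χ₁ * a ^ k) (hz : ∀ k, (z ᵥ* B ^ k) ⬝ᵥ x₀ = φ₁ * b ^ k) :
    b ≤ a := by
  refine le_of_forall_mul_pow_le_mul_pow ha (mul_pos hβ hφ₁) (D := χ₁ * a ^ M) fun k => ?_
  calc β * φ₁ * b ^ k = ((β • z) ᵥ* B ^ k) ⬝ᵥ x₀ := by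
        rw [smul_vecMul, smul_dotProduct, hz, smul_eq_mul, mul_assoc]
    _ ≤ ((y ᵥ* B ^ M) ᵥ* B ^ k) ⬝ᵥ x₀ :=
        dotProduct_le_dotProduct_of_nonneg_right (vecMul_le_vecMul (pow_apply_nonneg hB k) hdom) hx₀
    _ = χ₁ * a ^ M * a ^ k := by rw [vecMul_vecMul, ← pow_add, hy, pow_add, mul_assoc]

lemma rate_le_of_matrixIrreducible {n : ℕ} {A : Matrix (Fin n) (Fin n) ℝ}
    (hirr : MatrixIrreducible A) (hA : ∀ i j, i ≠ j → 0 ≤ A i j) {x : ℝ → Fin n → ℝ}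
    (hode : ∀ t i, HasDerivAt (fun s => x s i) ((A *ᵥ x t) i) t) (hx : 0 ≤ x 0)
    {y z : Fin n → ℝ} (hy : 0 ≤ y) (hy₀ : y ≠ 0) {χ₁ χ₂ φ₁ φ₂ τ : ℝ} (hφ₁ : 0 < φ₁) (hτ : 0 < τ)
    (hyout : ∀ t ∈ Icc 0 τ, y ⬝ᵥ x t = χ₁ * exp (χ₂ * t))
    (hzout : ∀ t ∈ Icc 0 τ, z ⬝ᵥ x t = φ₁ * exp (φ₂ * t)) :
    φ₂ ≤ χ₂ := by
  obtain ⟨c, hAc, hc⟩ :=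
    ((eventually_one_add_map_abs_apply_le hA).and (eventually_gt_atTop (-χ₂))).exists
  set B := A + c • (1 : Matrix (Fin n) (Fin n) ℝ)
  have hP : ∀ i j, 0 ≤ ((1 : Matrix (Fin n) (Fin n) ℝ) + A.map (fun x => |x|)) i j :=
    fun i j => add_nonneg (one_apply_nonneg i j) (abs_nonneg _)
  have h1B : ∀ i j, (1 : Matrix (Fin n) (Fin n) ℝ) i j ≤ B i j :=
    fun i j => (le_add_of_nonneg_right (abs_nonneg (A i j))).trans (hAc i j)
  have hB : ∀ i j, 0 ≤ B i j := fun i j => (one_apply_nonneg i j).trans (h1B i j)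
  obtain ⟨j, hj⟩ := (Pi.lt_def.1 (hy.lt_of_ne hy₀.symm)).2
  obtain ⟨M, hM⟩ := exists_forall_pow_apply_pos h1B fun i =>
    (hirr j i).imp fun m hm => hm.trans_le (pow_apply_le_pow_apply hP hAc m j i)
  obtain ⟨β, hβ, hdom⟩ :=
    exists_pos_smul_le (fun i => vecMul_apply_pos (pow_apply_nonneg hB M) hy hj (hM i)) z
  have hmoments : ∀ {w K μ}, (∀ t ∈ Icc 0 τ, w ⬝ᵥ x t = K * exp (μ * t)) →
      ∀ k, (w ᵥ* B ^ k) ⬝ᵥ x 0 = K * (μ + c) ^ k := fun hw k => by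
    simpa using dotProduct_vecMul_add_smul_one_pow_eq_of_eq_exp hode hτ hw c k 0 ⟨le_rfl, hτ.le⟩
  exact (add_le_add_iff_right c).1 <| rate_le_of_smul_le_vecMul_pow hB hx hβ hdom hφ₁
    (by linarith) (hmoments hyout) (hmoments hzout)

theorem stmt_14_general (n : ℕ) (A : Matrix (Fin n) (Fin n) ℝ)
    (hoffdiag : ∀ i j : Fin n, i ≠ j → 0 ≤ A i j)
    (x : ℝ → (Fin n → ℝ)) (x₀ y₀ z₀ : Fin n → ℝ)
    (hx₀ : (∀ i, 0 ≤ x₀ i) ∧ x₀ ≠ 0)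
    (hy₀ : (∀ i, 0 ≤ y₀ i) ∧ y₀ ≠ 0)
    (hz₀ : (∀ i, 0 ≤ z₀ i) ∧ z₀ ≠ 0)
    (hx0 : x 0 = x₀)
    (hode : ∀ (t : ℝ) (i : Fin n),
      HasDerivAt (fun s => x s i) ((A.mulVec (x t)) i) t)
    (χ₁ χ₂ φ₁ φ₂ τ : ℝ) (hχ₁ : 0 < χ₁) (hφ₁ : 0 < φ₁) (hτ : 0 < τ)
    (hne : χ₂ ≠ φ₂)
    (hout1 : ∀ t ∈ Set.Icc (0 : ℝ) τ,
      (∑ i, y₀ i * x t i) = χ₁ * Real.exp (χ₂ * t))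
    (hout2 : ∀ t ∈ Set.Icc (0 : ℝ) τ,
      (∑ i, z₀ i * x t i) = φ₁ * Real.exp (φ₂ * t)) :
    ¬ MatrixIrreducible A := by
  intro hirr
  have hx : 0 ≤ x 0 := hx0 ▸ hx₀.1
  exact hne <| le_antisymm
    (rate_le_of_matrixIrreducible hirr hoffdiag hode hx hz₀.1 hz₀.2 hχ₁ hτ hout2 hout1)
    (rate_le_of_matrixIrreducible hirr hoffdiag hode hx hy₀.1 hy₀.2 hφ₁ hτ hout1 hout2)

/-- (Remark 8.2.) Let `A` be a real matrix with nonnegative off-diagonal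
entries. If the solution of `x' = A x`, `x 0 = x₀ > 0` produces two exponential
outputs `⟨y₀, x t⟩ = χ₁ e^{χ₂ t}` and `⟨z₀, x t⟩ = φ₁ e^{φ₂ t}` on `[0, τ]`
with `y₀, z₀ > 0`, `χ₁, φ₁ > 0`, `τ > 0` and `χ₂ ≠ φ₂`, then `A` is reducible. -/
theorem stmt_14 (n : ℕ) (hn : 0 < n) (A : Matrix (Fin n) (Fin n) ℝ)
    (hoffdiag : ∀ i j : Fin n, i ≠ j → 0 ≤ A i j)
    (x : ℝ → (Fin n → ℝ)) (x₀ y₀ z₀ : Fin n → ℝ)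
    (hx₀ : (∀ i, 0 ≤ x₀ i) ∧ x₀ ≠ 0)
    (hy₀ : (∀ i, 0 ≤ y₀ i) ∧ y₀ ≠ 0)
    (hz₀ : (∀ i, 0 ≤ z₀ i) ∧ z₀ ≠ 0)
    (hx0 : x 0 = x₀)
    (hode : ∀ (t : ℝ) (i : Fin n),
      HasDerivAt (fun s => x s i) ((A.mulVec (x t)) i) t)
    (χ₁ χ₂ φ₁ φ₂ τ : ℝ) (hχ₁ : 0 < χ₁) (hφ₁ : 0 < φ₁) (hτ : 0 < τ)
    (hne : χ₂ ≠ φ₂)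
    (hout1 : ∀ t ∈ Set.Icc (0 : ℝ) τ,
      (∑ i, y₀ i * x t i) = χ₁ * Real.exp (χ₂ * t))
    (hout2 : ∀ t ∈ Set.Icc (0 : ℝ) τ,
      (∑ i, z₀ i * x t i) = φ₁ * Real.exp (φ₂ * t)) :
    ¬ MatrixIrreducible A :=
  stmt_14_general n A hoffdiag x x₀ y₀ z₀ hx₀ hy₀ hz₀ hx0 hode χ₁ χ₂ φ₁ φ₂ τ hχ₁ hφ₁ hτ hne hout1
    hout2
end

section
/- The final size equation 0 = I₀ + S₀(1 − exp(−τ𝓘∞)) − ν𝓘∞ has a unique positive solution 𝓘∞ > 0, and 𝓘∞ is the limit as t → ∞ of the solution of 𝓘'(t) = I₀ + S₀(1 − exp(−τ𝓘(t))) − ν𝓘(t), 𝓘(t₀) = 0. -/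
/-!
The right-hand side `g` of the final size equation is concave with `g 0 = I₀ > 0`. Concavity
makes `g` lie above the chord `g 0 / r * (r - x)` on `[0, r]` for a positive zero `r`
(given by the intermediate value theorem) and negative beyond `r`, so `r` is the only positive
zero. Since `g 0 > 0` and `g (r + ε) < 0`, the solution can cross neither `0` nor `r + ε`, so it
stays in `[0, r]`; there the chord bound gives `(r - 𝓘)' ≤ -(g 0 / r) (r - 𝓘)`, and Grönwall's
inequality makes `r - 𝓘` decay exponentially.
-/

open Filter Set Real Topology

section AutonomousODE

variable {g u : ℝ → ℝ} {t₀ : ℝ}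

theorem le_of_hasDerivAt_of_rhs_neg {b : ℝ}
    (hu : ∀ t ≥ t₀, HasDerivAt u (g (u t)) t) (hb : g b < 0) (h₀ : u t₀ ≤ b) :
    ∀ t ≥ t₀, u t ≤ b := fun t ht =>
  image_le_of_deriv_right_lt_deriv_boundary (B := fun _ => b) (B' := 0)
    (fun s hs => (hu s hs.1).continuousAt.continuousWithinAt)
    (fun s hs => (hu s hs.1).hasDerivWithinAt) h₀ (fun _ => hasDerivAt_const _ _)
    (fun s _ hs => by simpa [hs] using hb) ⟨ht, le_rfl⟩

theorem le_of_hasDerivAt_of_rhs_pos {a : ℝ}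
    (hu : ∀ t ≥ t₀, HasDerivAt u (g (u t)) t) (ha : 0 < g a) (h₀ : a ≤ u t₀) :
    ∀ t ≥ t₀, a ≤ u t := fun t ht =>
  image_le_of_deriv_right_lt_deriv_boundary' (f := fun _ => a) (f' := 0)
    continuousOn_const (fun _ _ => hasDerivWithinAt_const _ _ _) h₀
    (fun s hs => (hu s hs.1).continuousAt.continuousWithinAt)
    (fun s hs => (hu s hs.1).hasDerivWithinAt)
    (fun s _ hs => by simpa [← hs] using ha) ⟨ht, le_rfl⟩

theorem sub_le_mul_exp_of_hasDerivAt {u' : ℝ → ℝ} {r k : ℝ}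
    (hu : ∀ t ≥ t₀, HasDerivAt u (u' t) t) (hk : ∀ t ≥ t₀, k * (r - u t) ≤ u' t) :
    ∀ t ≥ t₀, r - u t ≤ (r - u t₀) * exp (-k * (t - t₀)) := fun t ht => by
  simpa only [gronwallBound_ε0] using
    le_gronwallBound_of_liminf_deriv_right_le (f := fun s => r - u s) (f' := fun s => -u' s)
      (ε := 0) (fun s hs => (hu s hs.1).continuousAt.continuousWithinAt.const_sub r)
      (fun s hs _ => ((hu s hs.1).hasDerivWithinAt.const_sub r).liminf_right_slope_le)
      le_rfl (fun s hs => by linarith [hk s hs.1]) t ⟨ht, le_rfl⟩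

end AutonomousODE

namespace ConcaveOn

variable {g : ℝ → ℝ} (hg : ConcaveOn ℝ (Ici 0) g)
include hg

theorem one_sub_mul_map_zero_add_mul_le {μ y : ℝ} (hμ₀ : 0 ≤ μ) (hμ₁ : μ ≤ 1) (hy : 0 ≤ y) :
    (1 - μ) * g 0 + μ * g y ≤ g (μ * y) := by
  simpa using hg.2 self_mem_Ici (mem_Ici.2 hy) (sub_nonneg.2 hμ₁) hμ₀ (by ring)

theorem div_mul_sub_le_of_map_eq_zero {r x : ℝ} (hr : 0 < r) (hgr : g r = 0) (hx₀ : 0 ≤ x)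
    (hxr : x ≤ r) : g 0 / r * (r - x) ≤ g x := by
  have h := hg.one_sub_mul_map_zero_add_mul_le (div_nonneg hx₀ hr.le)
    ((div_le_one hr).2 hxr) hr.le
  rw [hgr, mul_zero, add_zero, div_mul_cancel₀ _ hr.ne'] at h
  calc g 0 / r * (r - x) = (1 - x / r) * g 0 := by field_simp
    _ ≤ g x := h

theorem map_neg_of_lt_of_map_eq_zero (hg₀ : 0 < g 0) {r x : ℝ} (hr : 0 ≤ r) (hgr : g r = 0)
    (hrx : r < x) : g x < 0 := by
  have hx : 0 < x := hr.trans_lt hrx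
  have h := hg.one_sub_mul_map_zero_add_mul_le (div_nonneg hr hx.le)
    ((div_le_one hx).2 hrx.le) hx.le
  rw [div_mul_cancel₀ _ hx.ne', hgr] at h
  have hμ : r / x < 1 := (div_lt_one hx).2 hrx
  nlinarith [div_nonneg hr hx.le]

theorem eq_of_map_eq_zero (hg₀ : 0 < g 0) {r x : ℝ} (hr : 0 < r) (hgr : g r = 0) (hx : 0 ≤ x)
    (hgx : g x = 0) : x = r := by
  rcases lt_trichotomy x r with hxr | rfl | hrx
  · have := hg.div_mul_sub_le_of_map_eq_zero hr hgr hx hxr.le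
    have : 0 < g 0 / r * (r - x) := mul_pos (div_pos hg₀ hr) (sub_pos.2 hxr)
    linarith
  · rfl
  · linarith [hg.map_neg_of_lt_of_map_eq_zero hg₀ hr.le hgr hrx]

theorem tendsto_of_hasDerivAt (hg₀ : 0 < g 0) {r t₀ : ℝ} (hr : 0 < r) (hgr : g r = 0)
    {u : ℝ → ℝ} (hu₀ : u t₀ = 0) (hu : ∀ t ≥ t₀, HasDerivAt u (g (u t)) t) :
    Tendsto u atTop (𝓝 r) := by
  have hle : ∀ t ≥ t₀, u t ≤ r := fun t ht =>
    le_of_forall_pos_le_add fun ε hε => le_of_hasDerivAt_of_rhs_neg hu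
      (hg.map_neg_of_lt_of_map_eq_zero hg₀ hr.le hgr (lt_add_of_pos_right r hε))
      (by linarith) t ht
  have hge : ∀ t ≥ t₀, 0 ≤ u t := le_of_hasDerivAt_of_rhs_pos hu hg₀ hu₀.ge
  have hrate : ∀ t ≥ t₀, r - u t ≤ r * exp (-(g 0 / r) * (t - t₀)) := by
    simpa only [hu₀, sub_zero] using sub_le_mul_exp_of_hasDerivAt hu fun t ht =>
      hg.div_mul_sub_le_of_map_eq_zero hr hgr (hge t ht) (hle t ht)
  have hdecay : Tendsto (fun t => r * exp (-(g 0 / r) * (t - t₀))) atTop (𝓝 0) := by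
    have hlin : Tendsto (fun t => -(g 0 / r) * (t - t₀)) atTop atBot :=
      (tendsto_atTop_add_const_right _ (-t₀) tendsto_id).const_mul_atTop_of_neg
        (neg_neg_of_pos (div_pos hg₀ hr))
    simpa using (tendsto_exp_atBot.comp hlin).const_mul r
  have := squeeze_zero' (eventually_atTop.2 ⟨t₀, fun t ht => sub_nonneg.2 (hle t ht)⟩)
    (eventually_atTop.2 ⟨t₀, hrate⟩) hdecay
  simpa using this.const_sub r

end ConcaveOn

noncomputable def finalSizeRhs (I₀ S₀ τ ν x : ℝ) : ℝ :=
  I₀ + S₀ * (1 - exp (-τ * x)) - ν * x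

theorem concaveOn_finalSizeRhs (I₀ τ ν : ℝ) {S₀ : ℝ} (hS₀ : 0 ≤ S₀) :
    ConcaveOn ℝ univ (finalSizeRhs I₀ S₀ τ ν) := by
  have hexp : ConvexOn ℝ univ fun x => exp (-τ * x) := by
    simpa [Function.comp_def] using convexOn_exp.comp_linearMap (LinearMap.mulLeft ℝ (-τ))
  have hlin : ConcaveOn ℝ univ fun x : ℝ => (-ν) * x :=
    (LinearMap.mulLeft ℝ (-ν)).concaveOn convex_univ
  have h := ((hexp.smul hS₀).neg.add hlin).add_const (I₀ + S₀)
  refine h.congr fun x _ => ?_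
  simp only [finalSizeRhs, Pi.add_apply, Pi.neg_apply, smul_eq_mul]
  ring

theorem exists_pos_finalSizeRhs_eq_zero {I₀ S₀ ν : ℝ} (τ : ℝ) (hI₀ : 0 < I₀) (hS₀ : 0 < S₀)
    (hν : 0 < ν) : ∃ r, 0 < r ∧ finalSizeRhs I₀ S₀ τ ν r = 0 := by
  set M := (I₀ + S₀) / ν
  have hM : 0 < M := by positivity
  have hgM : finalSizeRhs I₀ S₀ τ ν M < 0 := by
    have : ν * M = I₀ + S₀ := mul_div_cancel₀ _ hν.ne'
    simp only [finalSizeRhs, this]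
    nlinarith [exp_pos (-τ * M)]
  have hcont : Continuous (finalSizeRhs I₀ S₀ τ ν) := by unfold finalSizeRhs; fun_prop
  obtain ⟨r, hr, hgr⟩ := intermediate_value_Ioo' hM.le hcont.continuousOn
    ⟨hgM, by simpa [finalSizeRhs] using hI₀⟩
  exact ⟨r, hr.1, hgr⟩

theorem stmt_19_general (I₀ S₀ τ ν t₀ : ℝ)
    (hI₀ : 0 < I₀) (hS₀ : 0 < S₀) (hν : 0 < ν) :
    ∃ Iinf : ℝ, 0 < Iinf ∧
      (I₀ + S₀ * (1 - Real.exp (-τ * Iinf)) - ν * Iinf = 0) ∧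
      (∀ x : ℝ, 0 < x → I₀ + S₀ * (1 - Real.exp (-τ * x)) - ν * x = 0 → x = Iinf) ∧
      (∀ 𝓘 : ℝ → ℝ, 𝓘 t₀ = 0 →
        (∀ t : ℝ, t₀ ≤ t →
          HasDerivAt 𝓘 (I₀ + S₀ * (1 - Real.exp (-τ * 𝓘 t)) - ν * 𝓘 t) t) →
        Tendsto 𝓘 atTop (nhds Iinf)) := by
  have hg := (concaveOn_finalSizeRhs I₀ τ ν hS₀.le).subset (subset_univ _) (convex_Ici 0)
  have hg₀ : 0 < finalSizeRhs I₀ S₀ τ ν 0 := by simpa [finalSizeRhs] using hI₀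
  obtain ⟨r, hr, hgr⟩ := exists_pos_finalSizeRhs_eq_zero τ hI₀ hS₀ hν
  exact ⟨r, hr, hgr, fun x hx hgx => hg.eq_of_map_eq_zero hg₀ hr hgr hx.le hgx,
    fun u hu₀ hu => hg.tendsto_of_hasDerivAt hg₀ hr hgr hu₀ hu⟩

/-- The final size equation `0 = I₀ + S₀(1 − exp(−τ x)) − ν x` has a unique
positive solution `𝓘∞ > 0`, and `𝓘∞` is the limit as `t → ∞` of the solution
of `𝓘' = I₀ + S₀(1 − exp(−τ 𝓘)) − ν 𝓘`, `𝓘 t₀ = 0`. -/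
theorem stmt_19 (I₀ S₀ τ ν t₀ : ℝ)
    (hI₀ : 0 < I₀) (hS₀ : 0 < S₀) (hτ : 0 < τ) (hν : 0 < ν) :
    ∃ Iinf : ℝ, 0 < Iinf ∧
      (I₀ + S₀ * (1 - Real.exp (-τ * Iinf)) - ν * Iinf = 0) ∧
      (∀ x : ℝ, 0 < x → I₀ + S₀ * (1 - Real.exp (-τ * x)) - ν * x = 0 → x = Iinf) ∧
      (∀ 𝓘 : ℝ → ℝ, 𝓘 t₀ = 0 →
        (∀ t : ℝ, t₀ ≤ t →
          HasDerivAt 𝓘 (I₀ + S₀ * (1 - Real.exp (-τ * 𝓘 t)) - ν * 𝓘 t) t) →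
        Tendsto 𝓘 atTop (nhds Iinf)) :=
  stmt_19_general I₀ S₀ τ ν t₀ hI₀ hS₀ hν
end
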